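/- arXiv:1709.01906 — 2 statements merged into one kernel-verified Lean document; each statement's English description precedes it below -/
import Mathlib

section
/- Let q>0 and λ>0, and let g₁,g₂ ∈ L²(Ω) with g₁ ≤ g₂ a.e. in Ω. Suppose u,v ∈ X₀(Ω) satisfy ess inf_K u > 0 and ess inf_K v > 0 for every compact K ⊂ Ω, u^{-q}φ and v^{-q}φ are integrable over Ω for every φ ∈ X₀(Ω), and for every φ ∈ X₀(Ω): ∫_Ω uφ dx + λ(E(u,φ) − ∫_Ω u^{-q}φ dx) = ∫_Ω g₁φ dx and ∫_Ω vφ dx + λ(E(v,φ) − ∫_Ω v^{-q}φ dx) = ∫_Ω g₂φ dx. Then u ≤ v a.e. in Ω. -/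
open MeasureTheory Set Filter
open scoped ENNReal RealInnerProductSpace

noncomputable section

/-- Euclidean space ℝⁿ. -/
abbrev Eu (n : ℕ) : Type := EuclideanSpace ℝ (Fin n)

/-- The normalizing constant `C_n^s = π^{-n/2} 2^{2s-1} s Γ((n+2s)/2)/Γ(1-s)`. -/
def Cns (n : ℕ) (s : ℝ) : ℝ :=
  Real.pi ^ (-(n : ℝ) / 2) * (2 : ℝ) ^ (2 * s - 1) * s *
    Real.Gamma (((n : ℝ) + 2 * s) / 2) / Real.Gamma (1 - s)

/-- `Q = ℝ²ⁿ ∖ ((ℝⁿ∖Ω) × (ℝⁿ∖Ω))`. -/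
def Qset {n : ℕ} (Ω : Set (Eu n)) : Set (Eu n × Eu n) := (Ωᶜ ×ˢ Ωᶜ)ᶜ

/-- The Gagliardo kernel `(u(x)-u(y))(v(x)-v(y))/|x-y|^{n+2s}`. -/
def gKer {n : ℕ} (s : ℝ) (u v : Eu n → ℝ) (p : Eu n × Eu n) : ℝ :=
  (u p.1 - u p.2) * (v p.1 - v p.2) / dist p.1 p.2 ^ ((n : ℝ) + 2 * s)

/-- The bilinear form `E(u,v) = C_n^s ∫∫_Q (u(x)-u(y))(v(x)-v(y))/|x-y|^{n+2s}`. -/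
def bilinE {n : ℕ} (s : ℝ) (Ω : Set (Eu n)) (u v : Eu n → ℝ) : ℝ :=
  Cns n s * ∫ p in Qset Ω, gKer s u v p

/-- `‖u‖²_{X₀(Ω)}`. -/
def normX0sq {n : ℕ} (s : ℝ) (Ω : Set (Eu n)) (u : Eu n → ℝ) : ℝ := bilinE s Ω u u

/-- `‖u‖_{X₀(Ω)}`. -/
def normX0 {n : ℕ} (s : ℝ) (Ω : Set (Eu n)) (u : Eu n → ℝ) : ℝ :=
  Real.sqrt (normX0sq s Ω u)

/-- `u ∈ X₀(Ω)`: measurable, vanishing a.e. outside `Ω`, square integrable on `Ω`,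
with finite Gagliardo energy. -/
def MemX0 {n : ℕ} (s : ℝ) (Ω : Set (Eu n)) (u : Eu n → ℝ) : Prop :=
  Measurable u ∧ (∀ᵐ x : Eu n, x ∉ Ω → u x = 0) ∧
    MemLp u 2 (volume.restrict Ω) ∧ IntegrableOn (gKer s u u) (Qset Ω)

/-- `Ω` has `C²` boundary: near every boundary point, `Ω` is given by a `C²` local
defining function with nonvanishing differential. -/
def HasC2Boundary {n : ℕ} (Ω : Set (Eu n)) : Prop :=
  ∀ x ∈ frontier Ω, ∃ U : Set (Eu n), IsOpen U ∧ x ∈ U ∧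
    ∃ g : Eu n → ℝ, ContDiff ℝ 2 g ∧ (∀ y ∈ U, (y ∈ Ω ↔ g y < 0)) ∧
      ∀ y ∈ U ∩ frontier Ω, fderiv ℝ g y ≠ 0

/-- Bounded domain (open, connected, nonempty) with `C²` boundary. -/
def GoodDomain {n : ℕ} (Ω : Set (Eu n)) : Prop :=
  IsOpen Ω ∧ Bornology.IsBounded Ω ∧ IsConnected Ω ∧ HasC2Boundary Ω

/-- `δ(x) = dist(x, ∂Ω)`. -/
def bdry {n : ℕ} (Ω : Set (Eu n)) (x : Eu n) : ℝ := Metric.infDist x (frontier Ω)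

/-- `g ∈ L^∞(Ω)`. -/
def MemLinfty {n : ℕ} (Ω : Set (Eu n)) (g : Eu n → ℝ) : Prop :=
  Measurable g ∧ ∃ M : ℝ, ∀ᵐ x ∂(volume.restrict Ω), |g x| ≤ M

/-- `ess inf_K u > 0` for every compact `K ⊆ Ω`. -/
def PosOnCompacts {n : ℕ} (Ω : Set (Eu n)) (u : Eu n → ℝ) : Prop :=
  ∀ K : Set (Eu n), IsCompact K → K ⊆ Ω →
    ∃ c : ℝ, 0 < c ∧ ∀ᵐ x ∂(volume.restrict K), c ≤ u x

/-- The conical shell `𝒞` (depending on `q`, `s` and a fixed `r > diam Ω`). -/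
def InCone {n : ℕ} (s q r : ℝ) (Ω : Set (Eu n)) (v : Eu n → ℝ) : Prop :=
  MemLinfty Ω v ∧ ∃ k₁ k₂ : ℝ, 0 < k₁ ∧ 0 < k₂ ∧
    ∀ᵐ x ∂(volume.restrict Ω),
      (q < 1 → k₁ * bdry Ω x ^ s ≤ v x ∧ v x ≤ k₂ * bdry Ω x ^ s) ∧
      (q = 1 →
        k₁ * (bdry Ω x ^ s * Real.sqrt (Real.log (r / bdry Ω x ^ s))) ≤ v x ∧
        v x ≤ k₂ * (bdry Ω x ^ s * Real.sqrt (Real.log (r / bdry Ω x ^ s)))) ∧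
      (1 < q →
        k₁ * bdry Ω x ^ (2 * s / (q + 1)) ≤ v x ∧
        v x ≤ k₂ * bdry Ω x ^ (2 * s / (q + 1)))

/-- Weak solution of `(S)`: `u + λ((−Δ)^s u − u^{-q}) = g` in `Ω`, `u = 0` outside `Ω`. -/
def IsWeakSolS {n : ℕ} (s q lam : ℝ) (Ω : Set (Eu n)) (g u : Eu n → ℝ) : Prop :=
  MemX0 s Ω u ∧ PosOnCompacts Ω u ∧
    ∀ φ : Eu n → ℝ, MemX0 s Ω φ →
      IntegrableOn (fun x => u x ^ (-q) * φ x) Ω ∧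
      (∫ x in Ω, u x * φ x) + lam * (bilinE s Ω u φ - ∫ x in Ω, u x ^ (-q) * φ x) =
        ∫ x in Ω, g x * φ x

/-- `u ∈ C^α(ℝⁿ)`. -/
def HolderCα {n : ℕ} (α : ℝ) (u : Eu n → ℝ) : Prop :=
  ∃ C : ℝ, 0 < C ∧ ∀ x y : Eu n, |u x - u y| ≤ C * dist x y ^ α

/-- Hölder regularity with exponent `α = s` if `q<1`, `α = s-ε` (any small `ε>0`) if `q=1`,
and `α = 2s/(q+1)` if `q>1`. -/
def RegAlpha {n : ℕ} (s q : ℝ) (u : Eu n → ℝ) : Prop :=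
  (q < 1 → HolderCα s u) ∧
  (q = 1 → ∃ ε₀ : ℝ, 0 < ε₀ ∧ ∀ ε : ℝ, 0 < ε → ε < ε₀ → HolderCα (s - ε) u) ∧
  (1 < q → HolderCα (2 * s / (q + 1)) u)

/-
Test the difference of the two equations with `φ = (u - v)⁺ ∈ X₀(Ω)`. The zeroth order terms give
`∫ φ²`, the Gagliardo form gives `E(u - v, (u - v)⁺) ≥ 0`, and on `{u > v}` the singular term
`u^{-q} - v^{-q}` and the data `g₁ - g₂` are nonpositive. Hence `∫ φ² ≤ 0`, so `φ = 0` a.e.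
-/

lemma Cns_pos {n : ℕ} {s : ℝ} (hs0 : 0 < s) (hs1 : s < 1) : 0 < Cns n s := by
  unfold Cns
  have hΓ₁ : 0 < Real.Gamma (((n : ℝ) + 2 * s) / 2) := Real.Gamma_pos_of_pos (by positivity)
  have hΓ₂ : 0 < Real.Gamma (1 - s) := Real.Gamma_pos_of_pos (by linarith)
  have hπ : 0 < Real.pi ^ (-(n : ℝ) / 2) := Real.rpow_pos_of_pos Real.pi_pos _
  have h₂ : (0 : ℝ) < 2 ^ (2 * s - 1) := Real.rpow_pos_of_pos two_pos _
  positivity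

lemma PosOnCompacts.ae_pos {n : ℕ} {Ω : Set (Eu n)} (hΩ : MeasurableSet Ω) {u : Eu n → ℝ}
    (hu : Measurable u) (h : PosOnCompacts Ω u) : ∀ᵐ x ∂(volume.restrict Ω), 0 < u x := by
  rw [ae_restrict_iff' hΩ, ae_iff]
  by_contra hne
  have hA : MeasurableSet (Ω ∩ {x | u x ≤ 0}) := hΩ.inter (measurableSet_le hu measurable_const)
  -- inner regularity of Lebesgue measure yields a compact `K ⊆ Ω` of positive measure with `u ≤ 0`
  obtain ⟨K, hKA, hK, hKpos⟩ := hA.exists_lt_isCompact (r := 0) (by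
    refine pos_iff_ne_zero.mpr fun h0 => hne (measure_mono_null (fun x hx => ?_) h0)
    simp only [mem_ofPred_eq, Classical.not_imp, not_lt] at hx
    exact hx)
  obtain ⟨c, hc, hcu⟩ := h K hK fun x hx => (hKA hx).1
  have hfalse : ∀ᵐ x ∂(volume.restrict K), False := by
    filter_upwards [hcu, ae_restrict_mem hK.measurableSet] with x hcx hxK
    linarith [show u x ≤ 0 from (hKA hxK).2]
  rw [eventually_false_iff_eq_bot, ae_eq_bot, Measure.restrict_eq_zero] at hfalse
  exact hKpos.ne' hfalse

section Gagliardo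

variable {n : ℕ} {s : ℝ}

lemma measurable_gKer {u v : Eu n → ℝ} (hu : Measurable u) (hv : Measurable v) :
    Measurable (gKer s u v) :=
  (((hu.comp measurable_fst).sub (hu.comp measurable_snd)).mul
    ((hv.comp measurable_fst).sub (hv.comp measurable_snd))).div
    (measurable_dist.pow_const _)

lemma gKer_self_nonneg (u : Eu n → ℝ) (p : Eu n × Eu n) : 0 ≤ gKer s u u p :=
  div_nonneg (mul_self_nonneg _) (Real.rpow_nonneg dist_nonneg _)

lemma abs_gKer_le (u v : Eu n → ℝ) (p : Eu n × Eu n) :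
    |gKer s u v p| ≤ (gKer s u u p + gKer s v v p) / 2 := by
  set a := u p.1 - u p.2
  set b := v p.1 - v p.2
  have hd : 0 ≤ dist p.1 p.2 ^ ((n : ℝ) + 2 * s) := Real.rpow_nonneg dist_nonneg _
  have hab : |a * b| ≤ (a * a + b * b) / 2 := by
    rw [abs_mul]
    nlinarith [sq_nonneg (|a| - |b|), abs_mul_abs_self a, abs_mul_abs_self b]
  calc |gKer s u v p| ≤ ((a * a + b * b) / 2) / dist p.1 p.2 ^ ((n : ℝ) + 2 * s) := by
        rw [gKer, abs_div, abs_of_nonneg hd]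
        exact div_le_div_of_nonneg_right hab hd
    _ = (gKer s u u p + gKer s v v p) / 2 := by simp only [gKer, a, b]; ring

lemma gKer_sub_self_le (u v : Eu n → ℝ) (p : Eu n × Eu n) :
    gKer s (u - v) (u - v) p ≤ 2 * gKer s u u p + 2 * gKer s v v p := by
  have hd : 0 ≤ dist p.1 p.2 ^ ((n : ℝ) + 2 * s) := Real.rpow_nonneg dist_nonneg _
  simp only [gKer, Pi.sub_apply, mul_div_assoc', ← add_div]
  refine div_le_div_of_nonneg_right ?_ hd
  nlinarith [sq_nonneg ((u p.1 - u p.2) + (v p.1 - v p.2))]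

lemma gKer_posPart_self_le (w : Eu n → ℝ) (p : Eu n × Eu n) :
    gKer s (fun x => max (w x) 0) (fun x => max (w x) 0) p ≤ gKer s w w p := by
  refine div_le_div_of_nonneg_right ?_ (Real.rpow_nonneg dist_nonneg _)
  have h := abs_max_sub_max_le_abs (w p.1) (w p.2) 0
  rw [← abs_mul_abs_self, ← abs_mul_abs_self (w p.1 - w p.2)]
  exact mul_self_le_mul_self (abs_nonneg _) h

-- monotonicity of `a ↦ a⁺`: `(a - b) (a⁺ - b⁺) ≥ 0`
lemma gKer_posPart_nonneg (w : Eu n → ℝ) (p : Eu n × Eu n) :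
    0 ≤ gKer s w (fun x => max (w x) 0) p := by
  refine div_nonneg ?_ (Real.rpow_nonneg dist_nonneg _)
  rcases le_total (w p.1) (w p.2) with h | h
  · exact mul_nonneg_of_nonpos_of_nonpos (sub_nonpos.mpr h) (sub_nonpos.mpr (max_le_max_right 0 h))
  · exact mul_nonneg (sub_nonneg.mpr h) (sub_nonneg.mpr (max_le_max_right 0 h))

variable {Ω : Set (Eu n)}

lemma MemX0.sub {u v : Eu n → ℝ} (hu : MemX0 s Ω u) (hv : MemX0 s Ω v) :
    MemX0 s Ω (u - v) := by
  refine ⟨hu.1.sub hv.1, ?_, hu.2.2.1.sub hv.2.2.1, ?_⟩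
  · filter_upwards [hu.2.1, hv.2.1] with x hux hvx hx
    simp [hux hx, hvx hx]
  · refine ((hu.2.2.2.const_mul 2).add (hv.2.2.2.const_mul 2)).mono'
      (measurable_gKer (hu.1.sub hv.1) (hu.1.sub hv.1)).aestronglyMeasurable
      (Eventually.of_forall fun p => ?_)
    rw [Real.norm_eq_abs, abs_of_nonneg (gKer_self_nonneg _ p)]
    exact gKer_sub_self_le u v p

lemma MemX0.posPart {w : Eu n → ℝ} (hw : MemX0 s Ω w) :
    MemX0 s Ω (fun x => max (w x) 0) := by
  refine ⟨hw.1.max measurable_const, ?_, hw.2.2.1.pos_part, ?_⟩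
  · filter_upwards [hw.2.1] with x hwx hx
    simp [hwx hx]
  · refine hw.2.2.2.mono'
      (measurable_gKer (hw.1.max measurable_const) (hw.1.max measurable_const)).aestronglyMeasurable
      (Eventually.of_forall fun p => ?_)
    rw [Real.norm_eq_abs, abs_of_nonneg (gKer_self_nonneg _ p)]
    exact gKer_posPart_self_le w p

lemma MemX0.integrableOn_gKer {u v : Eu n → ℝ} (hu : MemX0 s Ω u) (hv : MemX0 s Ω v) :
    IntegrableOn (gKer s u v) (Qset Ω) :=
  ((hu.2.2.2.add hv.2.2.2).div_const 2).mono' (measurable_gKer hu.1 hv.1).aestronglyMeasurable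
    (Eventually.of_forall fun p => abs_gKer_le u v p)

lemma bilinE_sub_left {u v φ : Eu n → ℝ} (hu : IntegrableOn (gKer s u φ) (Qset Ω))
    (hv : IntegrableOn (gKer s v φ) (Qset Ω)) :
    bilinE s Ω (u - v) φ = bilinE s Ω u φ - bilinE s Ω v φ := by
  rw [bilinE, bilinE, bilinE, ← mul_sub, ← integral_sub hu hv]
  congr 1
  refine integral_congr_ae (Eventually.of_forall fun p => ?_)
  simp only [gKer, Pi.sub_apply]
  ring

lemma bilinE_posPart_nonneg (hs0 : 0 < s) (hs1 : s < 1) (w : Eu n → ℝ) :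
    0 ≤ bilinE s Ω w (fun x => max (w x) 0) :=
  mul_nonneg (Cns_pos hs0 hs1).le (integral_nonneg (gKer_posPart_nonneg w))

end Gagliardo

lemma mul_max_zero_self (a : ℝ) : a * max a 0 = max a 0 ^ 2 := by
  rcases le_total a 0 with h | h <;> simp [h, sq]

lemma rpow_neg_mul_max_sub_le {a b q : ℝ} (hb : 0 < b) (hq : 0 ≤ q) :
    a ^ (-q) * max (a - b) 0 ≤ b ^ (-q) * max (a - b) 0 := by
  rcases le_total a b with h | h
  · simp [sub_nonpos.mpr h]
  · exact mul_le_mul_of_nonneg_right (Real.rpow_le_rpow_of_nonpos hb h (neg_nonpos.mpr hq))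
      (le_max_right _ _)

theorem statement_0_general
    {n : ℕ} {s : ℝ} (hs0 : 0 < s) (hs1 : s < 1)
    {Ω : Set (Eu n)} (hΩ : GoodDomain Ω)
    {q lam : ℝ} (hq : 0 < q) (hlam : 0 < lam)
    {g₁ g₂ : Eu n → ℝ}
    (hg₁ : MemLp g₁ 2 (volume.restrict Ω)) (hg₂ : MemLp g₂ 2 (volume.restrict Ω))
    (hgle : ∀ᵐ x ∂(volume.restrict Ω), g₁ x ≤ g₂ x)
    {u v : Eu n → ℝ} (hu : MemX0 s Ω u) (hv : MemX0 s Ω v)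
    (hvpos : PosOnCompacts Ω v)
    (huint : ∀ φ : Eu n → ℝ, MemX0 s Ω φ → IntegrableOn (fun x => u x ^ (-q) * φ x) Ω)
    (hvint : ∀ φ : Eu n → ℝ, MemX0 s Ω φ → IntegrableOn (fun x => v x ^ (-q) * φ x) Ω)
    (hueq : ∀ φ : Eu n → ℝ, MemX0 s Ω φ →
      (∫ x in Ω, u x * φ x) + lam * (bilinE s Ω u φ - ∫ x in Ω, u x ^ (-q) * φ x) =
        ∫ x in Ω, g₁ x * φ x)
    (hveq : ∀ φ : Eu n → ℝ, MemX0 s Ω φ →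
      (∫ x in Ω, v x * φ x) + lam * (bilinE s Ω v φ - ∫ x in Ω, v x ^ (-q) * φ x) =
        ∫ x in Ω, g₂ x * φ x) :
    ∀ᵐ x ∂(volume.restrict Ω), u x ≤ v x := by
  set φ : Eu n → ℝ := fun x => max ((u - v) x) 0 with hφ_def
  have hφ : MemX0 s Ω φ := (hu.sub hv).posPart
  have hφL2 := hφ.2.2.1
  have hE : 0 ≤ bilinE s Ω u φ - bilinE s Ω v φ := by
    rw [← bilinE_sub_left (hu.integrableOn_gKer hφ) (hv.integrableOn_gKer hφ)]
    exact bilinE_posPart_nonneg hs0 hs1 _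
  have hsing : ∫ x in Ω, u x ^ (-q) * φ x ≤ ∫ x in Ω, v x ^ (-q) * φ x := by
    refine integral_mono_ae (huint φ hφ) (hvint φ hφ) ?_
    filter_upwards [hvpos.ae_pos hΩ.1.measurableSet hv.1] with x hvx
    exact rpow_neg_mul_max_sub_le hvx hq.le
  have hdata : ∫ x in Ω, g₁ x * φ x ≤ ∫ x in Ω, g₂ x * φ x := by
    refine integral_mono_ae (hg₁.integrable_mul hφL2) (hg₂.integrable_mul hφL2) ?_
    filter_upwards [hgle] with x hx
    exact mul_le_mul_of_nonneg_right hx (le_max_right _ _)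
  have hsq : ∫ x in Ω, φ x ^ 2 = (∫ x in Ω, u x * φ x) - ∫ x in Ω, v x * φ x := by
    have huφ : Integrable (fun x => u x * φ x) (volume.restrict Ω) := hu.2.2.1.integrable_mul hφL2
    have hvφ : Integrable (fun x => v x * φ x) (volume.restrict Ω) := hv.2.2.1.integrable_mul hφL2
    rw [← integral_sub huφ hvφ]
    simp only [← sub_mul, hφ_def, Pi.sub_apply, mul_max_zero_self]
  have hsq_nonpos : ∫ x in Ω, φ x ^ 2 ≤ 0 := by
    nlinarith [hueq φ hφ, hveq φ hφ, mul_nonneg hlam.le (sub_nonneg.mpr hsing)]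
  have hφ_zero : (fun x => φ x ^ 2) =ᵐ[volume.restrict Ω] 0 :=
    (integral_eq_zero_iff_of_nonneg (fun x => sq_nonneg (φ x)) hφL2.integrable_sq).mp
      (hsq_nonpos.antisymm (integral_nonneg fun x => sq_nonneg (φ x)))
  filter_upwards [hφ_zero] with x hx
  simpa [hφ_def, sub_nonpos] using hx

/-- Weak comparison principle for the operator `A_λ u = u + λ((−Δ)^s u − u^{-q})`. -/
theorem statement_0
    {n : ℕ} {s : ℝ} (hs0 : 0 < s) (hs1 : s < 1) (hns : 2 * s < (n : ℝ))
    {Ω : Set (Eu n)} (hΩ : GoodDomain Ω)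
    {q lam : ℝ} (hq : 0 < q) (hlam : 0 < lam)
    {g₁ g₂ : Eu n → ℝ}
    (hg₁ : MemLp g₁ 2 (volume.restrict Ω)) (hg₂ : MemLp g₂ 2 (volume.restrict Ω))
    (hgle : ∀ᵐ x ∂(volume.restrict Ω), g₁ x ≤ g₂ x)
    {u v : Eu n → ℝ} (hu : MemX0 s Ω u) (hv : MemX0 s Ω v)
    (hupos : PosOnCompacts Ω u) (hvpos : PosOnCompacts Ω v)
    (huint : ∀ φ : Eu n → ℝ, MemX0 s Ω φ → IntegrableOn (fun x => u x ^ (-q) * φ x) Ω)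
    (hvint : ∀ φ : Eu n → ℝ, MemX0 s Ω φ → IntegrableOn (fun x => v x ^ (-q) * φ x) Ω)
    (hueq : ∀ φ : Eu n → ℝ, MemX0 s Ω φ →
      (∫ x in Ω, u x * φ x) + lam * (bilinE s Ω u φ - ∫ x in Ω, u x ^ (-q) * φ x) =
        ∫ x in Ω, g₁ x * φ x)
    (hveq : ∀ φ : Eu n → ℝ, MemX0 s Ω φ →
      (∫ x in Ω, v x * φ x) + lam * (bilinE s Ω v φ - ∫ x in Ω, v x ^ (-q) * φ x) =
        ∫ x in Ω, g₂ x * φ x) :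
    ∀ᵐ x ∂(volume.restrict Ω), u x ≤ v x :=
  statement_0_general hs0 hs1 hΩ hq hlam hg₁ hg₂ hgle hu hv hvpos huint hvint hueq hveq
end
end

section
/- (Discrete Picone inequality, pointwise form.) Let p ∈ (1,∞). For all real numbers a, b ≥ 0 and c, d > 0: |a − b|^p − |c − d|^{p−2}(c − d)(a^p/c^{p−1} − b^p/d^{p−1}) ≥ 0, where |c − d|^{p−2}(c − d) is interpreted as 0 when c = d. -/
/-!
By the symmetry `(a, c) ↔ (b, d)` we may assume `d < c`, where the weight
`|c - d| ^ (p - 2) * (c - d)` is `(c - d) ^ (p - 1)`. The inequality then amounts to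
`a ^ p / c ^ (p - 1) ≤ |a - b| ^ p / (c - d) ^ (p - 1) + b ^ p / d ^ (p - 1)`, which is the
two-term Radon inequality applied to `a ≤ |a - b| + b` and `c = (c - d) + d`.
-/

lemma mul_div_rpow_eq_rpow_div_rpow_sub_one {s x : ℝ} (hs : 0 < s) (hx : 0 ≤ x) (p : ℝ) :
    s * (x / s) ^ p = x ^ p / s ^ (p - 1) := by
  rw [Real.div_rpow hx hs.le, Real.rpow_sub_one hs.ne']
  field_simp

lemma add_rpow_div_rpow_sub_one_le {p : ℝ} (hp : 1 ≤ p) {x y s t : ℝ}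
    (hx : 0 ≤ x) (hy : 0 ≤ y) (hs : 0 < s) (ht : 0 < t) :
    (x + y) ^ p / (s + t) ^ (p - 1) ≤ x ^ p / s ^ (p - 1) + y ^ p / t ^ (p - 1) := by
  have hst : 0 < s + t := by positivity
  -- `(x + y) / (s + t)` is the convex combination of `x / s` and `y / t` with weights `s, t`
  have hjensen :
      ((x + y) / (s + t)) ^ p ≤ s / (s + t) * (x / s) ^ p + t / (s + t) * (y / t) ^ p := by
    have h := (convexOn_rpow hp).2 (Set.mem_Ici.2 (div_nonneg hx hs.le))
      (Set.mem_Ici.2 (div_nonneg hy ht.le)) (div_nonneg hs.le hst.le) (div_nonneg ht.le hst.le)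
      (by field_simp : s / (s + t) + t / (s + t) = 1)
    simp only [smul_eq_mul] at h
    rwa [show s / (s + t) * (x / s) + t / (s + t) * (y / t) = (x + y) / (s + t) by field_simp] at h
  rw [← mul_div_rpow_eq_rpow_div_rpow_sub_one hst (by positivity),
    ← mul_div_rpow_eq_rpow_div_rpow_sub_one hs hx,
    ← mul_div_rpow_eq_rpow_div_rpow_sub_one ht hy]
  calc (s + t) * ((x + y) / (s + t)) ^ p
      ≤ (s + t) * (s / (s + t) * (x / s) ^ p + t / (s + t) * (y / t) ^ p) := by gcongr
    _ = s * (x / s) ^ p + t * (y / t) ^ p := by field_simp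

lemma picone_of_lt {p : ℝ} (hp : 1 ≤ p) {a b c d : ℝ}
    (ha : 0 ≤ a) (hb : 0 ≤ b) (hd : 0 < d) (hdc : d < c) :
    |c - d| ^ (p - 2) * (c - d) * (a ^ p / c ^ (p - 1) - b ^ p / d ^ (p - 1)) ≤ |a - b| ^ p := by
  have hc : 0 < c := hd.trans hdc
  have hcd : 0 < c - d := sub_pos.2 hdc
  have hweight : |c - d| ^ (p - 2) * (c - d) = (c - d) ^ (p - 1) := by
    rw [abs_of_pos hcd, ← Real.rpow_add_one hcd.ne']
    ring_nf
  have hradon : a ^ p / c ^ (p - 1) ≤ |a - b| ^ p / (c - d) ^ (p - 1) + b ^ p / d ^ (p - 1) :=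
    calc a ^ p / c ^ (p - 1) ≤ (|a - b| + b) ^ p / ((c - d) + d) ^ (p - 1) := by
          rw [sub_add_cancel]
          gcongr
          linarith [le_abs_self (a - b)]
      _ ≤ _ := add_rpow_div_rpow_sub_one_le hp (abs_nonneg _) hb hcd hd
  calc |c - d| ^ (p - 2) * (c - d) * (a ^ p / c ^ (p - 1) - b ^ p / d ^ (p - 1))
      ≤ (c - d) ^ (p - 1) * (|a - b| ^ p / (c - d) ^ (p - 1)) := by
        rw [hweight]; gcongr; linarith
    _ = |a - b| ^ p := by field_simp

/-- Discrete Picone inequality, pointwise form: for `p ∈ (1,∞)`, `a, b ≥ 0`, `c, d > 0`,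
`|a − b|^p − |c − d|^{p−2}(c − d)(a^p/c^{p−1} − b^p/d^{p−1}) ≥ 0` (real powers;
note that `|c − d|^{p−2}(c − d) = 0` when `c = d`). -/
theorem statement_12 {p : ℝ} (hp : 1 < p) {a b c d : ℝ}
    (ha : 0 ≤ a) (hb : 0 ≤ b) (hc : 0 < c) (hd : 0 < d) :
    0 ≤ |a - b| ^ p -
      |c - d| ^ (p - 2) * (c - d) * (a ^ p / c ^ (p - 1) - b ^ p / d ^ (p - 1)) := by
  rcases lt_trichotomy d c with hdc | rfl | hcd
  · exact sub_nonneg.2 (picone_of_lt hp.le ha hb hd hdc)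
  · simp only [sub_self, mul_zero, zero_mul, sub_zero]
    positivity
  · have h := picone_of_lt hp.le hb ha hc hcd
    rw [abs_sub_comm b a, abs_sub_comm d c] at h
    linarith
end
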